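/- Let $h(\theta) = \sum_{k \ge 0} a_k \theta^k$ with $a_k \ge 0$, $a_0 > 0$, twice continuously differentiable near $0$. Let $X_{i,n}$, $1 \le i \le n$, be a triangular array of independent PSD random variables with parameters $\theta_{i,n}$, and $S_n = \sum_{i=1}^n X_{i,n}$. If $\max_{1\le i\le n}\theta_{i,n} \to 0$ and $\sum_{i=1}^n \theta_{i,n} \to \lambda > 0$, then $S_n$ converges in distribution to $\mathrm{Poi}(\lambda a_1/a_0)$. -/

import Mathlib

/-!
Le Cam's argument. For small `x`, the PSD law with parameter `x` and `Poi(a₁ x / a₀)` both agree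
with the first-order law `(1 - a₁ x / a₀, a₁ x / a₀, 0, …)` up to `O(x²)` in total variation, so
they are `K x²`-close. Total variation is subadditive under convolution and Poisson laws are
stable under it, hence `S_n` is within `K ∑ θᵢ² ≤ K (max θᵢ) ∑ θᵢ → 0` of `Poi(a₁ ∑ θᵢ / a₀)`,
which tends to `Poi(λ a₁ / a₀)` by continuity in the parameter.
-/

/-- The Poisson pmf with parameter `l`. -/
noncomputable def poissonPMF (l : ℝ) (k : ℕ) : ℝ :=
  Real.exp (-l) * l ^ k / (Nat.factorial k)

/-- Total variation distance between two distributions on `ℕ` (given by their pmfs). -/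
noncomputable def dTV (p q : ℕ → ℝ) : ℝ := (1 / 2) * ∑' k : ℕ, |p k - q k|

/-- Convolution of two pmfs on `ℕ`: the distribution of the sum of independent rvs. -/
noncomputable def conv (p q : ℕ → ℝ) : ℕ → ℝ :=
  fun k => ∑ j ∈ Finset.range (k + 1), p j * q (k - j)

/-- The pmf of the constant random variable `0`. -/
noncomputable def delta0 : ℕ → ℝ := fun k => if k = 0 then 1 else 0

/-- Distribution of the sum `S_n = X_1 + ⋯ + X_n` of independent rvs with pmfs `p i`. -/
noncomputable def convN {n : ℕ} (p : Fin n → ℕ → ℝ) : ℕ → ℝ :=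
  (List.ofFn p).foldr conv delta0

open Filter

open scoped Topology Nat

structure IsPMF (p : ℕ → ℝ) : Prop where
  nonneg : ∀ k, 0 ≤ p k
  hasSum : HasSum p 1

lemma IsPMF.summable {p : ℕ → ℝ} (hp : IsPMF p) : Summable p := hp.hasSum.summable

lemma IsPMF.tsum_eq {p : ℕ → ℝ} (hp : IsPMF p) : ∑' k, p k = 1 := hp.hasSum.tsum_eq

section Convolution

lemma conv_comm (p q : ℕ → ℝ) : conv p q = conv q p := by
  funext k
  rw [conv, conv, ← Finset.sum_range_reflect]
  refine Finset.sum_congr rfl fun j hj => ?_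
  have hj : j ≤ k := Finset.mem_range_succ_iff.mp hj
  rw [show k + 1 - 1 - j = k - j by omega, Nat.sub_sub_self hj, mul_comm]

lemma hasSum_conv {p q : ℕ → ℝ} (hp : Summable p) (hq : Summable q) :
    HasSum (conv p q) ((∑' k, p k) * ∑' k, q k) :=
  hasSum_sum_range_mul_of_summable_norm hp.norm hq.norm

lemma IsPMF.conv {p q : ℕ → ℝ} (hp : IsPMF p) (hq : IsPMF q) : IsPMF (conv p q) where
  nonneg k := Finset.sum_nonneg fun j _ => mul_nonneg (hp.nonneg j) (hq.nonneg _)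
  hasSum := by
    simpa only [hp.tsum_eq, hq.tsum_eq, mul_one] using hasSum_conv hp.summable hq.summable

lemma isPMF_delta0 : IsPMF delta0 where
  nonneg k := by unfold delta0; split_ifs <;> norm_num
  hasSum := by
    convert hasSum_ite_eq 0 (1 : ℝ) using 1
    ext k; simp [delta0]

lemma convN_zero (p : Fin 0 → ℕ → ℝ) : convN p = delta0 := rfl

lemma convN_succ {n : ℕ} (p : Fin (n + 1) → ℕ → ℝ) :
    convN p = conv (p 0) (convN fun i => p i.succ) := by
  rw [convN, List.ofFn_succ]
  rfl

lemma IsPMF.convN {n : ℕ} {p : Fin n → ℕ → ℝ} (hp : ∀ i, IsPMF (p i)) :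
    IsPMF (convN p) := by
  induction n with
  | zero => exact isPMF_delta0
  | succ n ih => rw [convN_succ]; exact (hp 0).conv (ih fun i => hp i.succ)

end Convolution

section TotalVariation

lemma dTV_comm (p q : ℕ → ℝ) : dTV p q = dTV q p := by
  simp only [dTV, abs_sub_comm]

lemma dTV_triangle {p q s : ℕ → ℝ} (hp : Summable p) (hq : Summable q) (hs : Summable s) :
    dTV p s ≤ dTV p q + dTV q s := by
  rw [dTV, dTV, dTV, ← mul_add, ← Summable.tsum_add (hp.sub hq).abs (hq.sub hs).abs]
  refine mul_le_mul_of_nonneg_left ?_ (by norm_num)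
  exact Summable.tsum_le_tsum (fun k => abs_sub_le _ _ _) (hp.sub hs).abs
    ((hp.sub hq).abs.add (hq.sub hs).abs)

lemma abs_sub_le_two_mul_dTV {p q : ℕ → ℝ} (hp : Summable p) (hq : Summable q) (m : ℕ) :
    |p m - q m| ≤ 2 * dTV p q := by
  rw [dTV, ← mul_assoc]
  norm_num
  exact (hp.sub hq).abs.le_tsum m fun k _ => abs_nonneg _

lemma dTV_conv_right_le {p q r : ℕ → ℝ} (hp : Summable p) (hq : Summable q) (hr : IsPMF r) :
    dTV (conv p r) (conv q r) ≤ dTV p q := by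
  have hpq : Summable fun k => |p k - q k| := (hp.sub hq).abs
  have hle : ∀ k, |conv p r k - conv q r k| ≤ conv (fun k => |p k - q k|) r k := fun k => by
    simp only [conv, ← Finset.sum_sub_distrib, ← sub_mul]
    refine (Finset.abs_sum_le_sum_abs _ _).trans_eq (Finset.sum_congr rfl fun j _ => ?_)
    rw [abs_mul, abs_of_nonneg (hr.nonneg _)]
  calc dTV (conv p r) (conv q r)
      ≤ 1 / 2 * ∑' k, conv (fun k => |p k - q k|) r k := by
        refine mul_le_mul_of_nonneg_left (Summable.tsum_le_tsum hle ?_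
          (hasSum_conv hpq hr.summable).summable) (by norm_num)
        exact ((hasSum_conv hp hr.summable).summable.sub
          (hasSum_conv hq hr.summable).summable).abs
    _ = dTV p q := by rw [(hasSum_conv hpq hr.summable).tsum_eq, hr.tsum_eq, mul_one, dTV]

lemma dTV_conv_le {p q r s : ℕ → ℝ} (hp : IsPMF p) (hq : IsPMF q) (hr : IsPMF r)
    (hs : IsPMF s) : dTV (conv p r) (conv q s) ≤ dTV p q + dTV r s :=
  calc dTV (conv p r) (conv q s) ≤ dTV (conv p r) (conv q r) + dTV (conv q r) (conv q s) :=
        dTV_triangle (hp.conv hr).summable (hq.conv hr).summable (hq.conv hs).summable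
    _ ≤ dTV p q + dTV r s := by
        refine add_le_add (dTV_conv_right_le hp.summable hq.summable hr) ?_
        rw [conv_comm q r, conv_comm q s]
        exact dTV_conv_right_le hr.summable hs.summable hq

lemma dTV_convN_le {n : ℕ} {p q : Fin n → ℕ → ℝ} (hp : ∀ i, IsPMF (p i))
    (hq : ∀ i, IsPMF (q i)) : dTV (convN p) (convN q) ≤ ∑ i, dTV (p i) (q i) := by
  induction n with
  | zero => simp [convN_zero, dTV]
  | succ n ih =>
    rw [convN_succ p, convN_succ q, Fin.sum_univ_succ]
    exact (dTV_conv_le (hp 0) (hq 0) (IsPMF.convN fun i => hp i.succ)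
      (IsPMF.convN fun i => hq i.succ)).trans
      (add_le_add le_rfl (ih (fun i => hp i.succ) fun i => hq i.succ))

lemma abs_convN_sub_convN_le {n : ℕ} {p q : Fin n → ℕ → ℝ} (hp : ∀ i, IsPMF (p i))
    (hq : ∀ i, IsPMF (q i)) (m : ℕ) :
    |convN p m - convN q m| ≤ 2 * ∑ i, dTV (p i) (q i) :=
  (abs_sub_le_two_mul_dTV (IsPMF.convN hp).summable (IsPMF.convN hq).summable m).trans
    (mul_le_mul_of_nonneg_left (dTV_convN_le hp hq) zero_le_two)

lemma tendsto_convN_sub_convN {p q : (n : ℕ) → Fin n → ℕ → ℝ} {ε : (n : ℕ) → Fin n → ℝ}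
    (hp : ∀ᶠ n in atTop, ∀ i, IsPMF (p n i)) (hq : ∀ n i, IsPMF (q n i))
    (hpq : ∀ᶠ n in atTop, ∀ i, dTV (p n i) (q n i) ≤ ε n i)
    (hε : Tendsto (fun n => ∑ i, ε n i) atTop (𝓝 0)) (m : ℕ) :
    Tendsto (fun n => convN (p n) m - convN (q n) m) atTop (𝓝 0) := by
  refine squeeze_zero_norm' ?_ (by simpa using hε.const_mul 2)
  filter_upwards [hp, hpq] with n hpn hpqn
  exact (abs_convN_sub_convN_le hpn (hq n) m).trans
    (mul_le_mul_of_nonneg_left (Finset.sum_le_sum fun i _ => hpqn i) zero_le_two)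

end TotalVariation

section Poisson

lemma isPMF_poissonPMF {l : ℝ} (hl : 0 ≤ l) : IsPMF (poissonPMF l) where
  nonneg k := by unfold poissonPMF; positivity
  hasSum := ProbabilityTheory.hasSum_one_poissonMeasure ⟨l, hl⟩

lemma continuous_poissonPMF (k : ℕ) : Continuous fun l => poissonPMF l k := by
  unfold poissonPMF; fun_prop

lemma poissonPMF_zero : poissonPMF 0 = delta0 := by
  funext k
  cases k <;> simp [poissonPMF, delta0]

lemma conv_poissonPMF (x y : ℝ) : conv (poissonPMF x) (poissonPMF y) = poissonPMF (x + y) := by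
  funext k
  rw [conv, poissonPMF, add_pow, Finset.mul_sum, Finset.sum_div]
  refine Finset.sum_congr rfl fun j hj => ?_
  have hj : j ≤ k := Finset.mem_range_succ_iff.mp hj
  have hfact : (k ! : ℝ) = k.choose j * j ! * (k - j)! := by
    exact_mod_cast (Nat.choose_mul_factorial_mul_factorial hj).symm
  rw [hfact, neg_add, Real.exp_add, poissonPMF, poissonPMF]
  have := (Nat.choose_pos hj).ne'
  field_simp

lemma convN_poissonPMF {n : ℕ} (μ : Fin n → ℝ) :
    convN (fun i => poissonPMF (μ i)) = poissonPMF (∑ i, μ i) := by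
  induction n with
  | zero => simp [convN_zero, poissonPMF_zero]
  | succ n ih => rw [convN_succ, ih, conv_poissonPMF, Fin.sum_univ_succ]

end Poisson

section FirstOrder

/-- The first-order law `(1 - y, y, 0, 0, …)`; a signed measure when `y > 1`, which is harmless
since only its `ℓ¹` distance to genuine laws is used. -/
def bernoulliPMF (y : ℝ) (k : ℕ) : ℝ := if k = 0 then 1 - y else if k = 1 then y else 0

lemma summable_bernoulliPMF (y : ℝ) : Summable (bernoulliPMF y) :=
  summable_of_ne_finset_zero (s := Finset.range 2) fun k hk => by
    simp only [Finset.mem_range, not_lt] at hk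
    simp [bernoulliPMF, show k ≠ 0 by omega, show k ≠ 1 by omega]

lemma two_mul_dTV_bernoulliPMF {p : ℕ → ℝ} (hp : IsPMF p) (y : ℝ) :
    2 * dTV p (bernoulliPMF y) = |p 0 - (1 - y)| + |p 1 - y| + (1 - p 0 - p 1) := by
  have htail : (fun k => |p (k + 2) - bernoulliPMF y (k + 2)|) = fun k => p (k + 2) := by
    funext k; simp [bernoulliPMF, abs_of_nonneg (hp.nonneg _)]
  have hs : Summable fun k => |p k - bernoulliPMF y k| :=
    (summable_nat_add_iff 2).mp (htail ▸ (summable_nat_add_iff 2).mpr hp.summable)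
  have hp2 := hp.summable.sum_add_tsum_nat_add 2
  rw [hp.tsum_eq] at hp2
  rw [dTV, ← mul_assoc, ← hs.sum_add_tsum_nat_add 2, htail]
  simp only [Finset.sum_range_succ, Finset.sum_range_zero] at hp2 ⊢
  simp only [bernoulliPMF]
  norm_num
  linarith

lemma dTV_poissonPMF_bernoulliPMF_le {y : ℝ} (hy : 0 ≤ y) :
    dTV (poissonPMF y) (bernoulliPMF y) ≤ y ^ 2 := by
  have h2 := two_mul_dTV_bernoulliPMF (isPMF_poissonPMF hy) y
  simp only [poissonPMF, pow_zero, pow_one, Nat.factorial, Nat.cast_one, div_one,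
    mul_one] at h2
  have hlow : 1 - y ≤ Real.exp (-y) := by linarith [Real.add_one_le_exp (-y)]
  have hle1 : Real.exp (-y) ≤ 1 := Real.exp_le_one_iff.mpr (by linarith)
  have hmass : Real.exp (-y) * (1 + y) ≤ 1 := by
    calc Real.exp (-y) * (1 + y) ≤ Real.exp (-y) * Real.exp y := by
          gcongr; linarith [Real.add_one_le_exp y]
      _ = 1 := by rw [← Real.exp_add, neg_add_cancel, Real.exp_zero]
  -- every term of the defect has a fixed sign, and their sum is `2 y (1 - e^{-y})`
  rw [abs_of_nonneg (by linarith), abs_of_nonpos (by nlinarith)] at h2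
  nlinarith

end FirstOrder

section PowerSeriesDistribution

noncomputable def psdPMF (a : ℕ → ℝ) (x : ℝ) (k : ℕ) : ℝ := a k * x ^ k / ∑' j, a j * x ^ j

variable {a : ℕ → ℝ}

lemma summable_mul_pow_of_le (ha : ∀ k, 0 ≤ a k) {x x₀ : ℝ} (hx : 0 ≤ x) (hxx₀ : x ≤ x₀)
    (hs : Summable fun k => a k * x₀ ^ k) : Summable fun k => a k * x ^ k :=
  Summable.of_nonneg_of_le (fun k => mul_nonneg (ha k) (pow_nonneg hx k))
    (fun k => mul_le_mul_of_nonneg_left (pow_le_pow_left₀ hx hxx₀ k) (ha k)) hs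

lemma tsum_mul_pow_add_two_le (ha : ∀ k, 0 ≤ a k) {x x₀ : ℝ} (hx₀ : 0 < x₀) (hx : 0 ≤ x)
    (hxx₀ : x ≤ x₀) (hs : Summable fun k => a k * x₀ ^ k) :
    ∑' k, a (k + 2) * x ^ (k + 2) ≤ (∑' k, a (k + 2) * x₀ ^ k) * x ^ 2 := by
  have hB : Summable fun k => a (k + 2) * x₀ ^ k * x ^ 2 := by
    refine Summable.mul_right _ ?_
    refine (((summable_nat_add_iff 2).mpr hs).div_const (x₀ ^ 2)).congr fun k => ?_
    rw [pow_add, ← mul_assoc, mul_div_cancel_right₀ _ (by positivity)]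
  have hle : ∀ k, a (k + 2) * x ^ (k + 2) ≤ a (k + 2) * x₀ ^ k * x ^ 2 := fun k => by
    rw [pow_add, ← mul_assoc]
    gcongr
    exact ha _
  rw [← tsum_mul_right]
  exact Summable.tsum_le_tsum hle (Summable.of_nonneg_of_le
    (fun k => mul_nonneg (ha _) (pow_nonneg hx _)) hle hB) hB

lemma isPMF_psdPMF (ha : ∀ k, 0 ≤ a k) (ha₀ : 0 < a 0) {x : ℝ} (hx : 0 ≤ x)
    (hs : Summable fun k => a k * x ^ k) : IsPMF (psdPMF a x) := by
  have hh : 0 < ∑' j, a j * x ^ j := ha₀.trans_le (by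
    simpa using hs.le_tsum 0 fun j _ => mul_nonneg (ha j) (pow_nonneg hx j))
  refine ⟨fun k => div_nonneg (mul_nonneg (ha k) (pow_nonneg hx k)) hh.le, ?_⟩
  have := hs.hasSum.div_const (∑' j, a j * x ^ j)
  rwa [div_self hh.ne'] at this

lemma first_order_defect_le {a₀ b T : ℝ} (ha₀ : 0 < a₀) (hb : 0 ≤ b) (hT : 0 ≤ T) :
    |a₀ / (a₀ + b + T) - (1 - b / a₀)| + |b / (a₀ + b + T) - b / a₀| +
      (1 - a₀ / (a₀ + b + T) - b / (a₀ + b + T)) ≤ 2 * (b * (b + T) / a₀ ^ 2 + T / a₀) := by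
  have hh : a₀ ≤ a₀ + b + T := by linarith
  have hh₀ : 0 < a₀ + b + T := ha₀.trans_le hh
  have e₀ : a₀ / (a₀ + b + T) - (1 - b / a₀) =
      b * (b + T) / (a₀ * (a₀ + b + T)) - T / (a₀ + b + T) := by field_simp; ring
  have e₁ : b / (a₀ + b + T) - b / a₀ = -(b * (b + T) / (a₀ * (a₀ + b + T))) := by
    field_simp; ring
  have e₂ : 1 - a₀ / (a₀ + b + T) - b / (a₀ + b + T) = T / (a₀ + b + T) := by
    field_simp; ring
  have hD : b * (b + T) / (a₀ * (a₀ + b + T)) ≤ b * (b + T) / a₀ ^ 2 :=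
    div_le_div_of_nonneg_left (by positivity) (by positivity) (by nlinarith)
  have hTle : T / (a₀ + b + T) ≤ T / a₀ := div_le_div_of_nonneg_left hT ha₀ hh
  have hD₀ : 0 ≤ b * (b + T) / (a₀ * (a₀ + b + T)) := by positivity
  have hT₀ : 0 ≤ T / (a₀ + b + T) := by positivity
  rw [e₀, e₁, e₂, abs_neg, abs_of_nonneg hD₀]
  have : |b * (b + T) / (a₀ * (a₀ + b + T)) - T / (a₀ + b + T)| ≤
      b * (b + T) / (a₀ * (a₀ + b + T)) + T / (a₀ + b + T) :=
    abs_sub_le_iff.2 ⟨by linarith, by linarith⟩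
  linarith

lemma two_mul_dTV_psdPMF_bernoulliPMF_le (ha : ∀ k, 0 ≤ a k) (ha₀ : 0 < a 0) {x : ℝ}
    (hx : 0 ≤ x) (hs : Summable fun k => a k * x ^ k) :
    2 * dTV (psdPMF a x) (bernoulliPMF (a 1 / a 0 * x)) ≤
      2 * (a 1 * x * (a 1 * x + ∑' k, a (k + 2) * x ^ (k + 2)) / a 0 ^ 2 +
        (∑' k, a (k + 2) * x ^ (k + 2)) / a 0) := by
  have hsplit : ∑' j, a j * x ^ j = a 0 + a 1 * x + ∑' k, a (k + 2) * x ^ (k + 2) := by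
    rw [← hs.sum_add_tsum_nat_add 2]
    simp [Finset.sum_range_succ]
  rw [two_mul_dTV_bernoulliPMF (isPMF_psdPMF ha ha₀ hx hs), div_mul_eq_mul_div]
  simp only [psdPMF, hsplit, pow_zero, pow_one, mul_one]
  exact first_order_defect_le ha₀ (mul_nonneg (ha 1) hx)
    (tsum_nonneg fun k => mul_nonneg (ha _) (pow_nonneg hx _))

lemma exists_dTV_psdPMF_poissonPMF_le (ha : ∀ k, 0 ≤ a k) (ha₀ : 0 < a 0) {x₀ : ℝ}
    (hx₀ : 0 < x₀) (hs : Summable fun k => a k * x₀ ^ k) :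
    ∃ K, ∀ x, 0 ≤ x → x ≤ x₀ → dTV (psdPMF a x) (poissonPMF (a 1 / a 0 * x)) ≤ K * x ^ 2 := by
  set B := ∑' k, a (k + 2) * x₀ ^ k
  have hB : 0 ≤ B := tsum_nonneg fun k => mul_nonneg (ha _) (pow_nonneg hx₀.le _)
  refine ⟨a 1 * (a 1 + B * x₀) / a 0 ^ 2 + B / a 0 + (a 1 / a 0) ^ 2, fun x hx hxx₀ => ?_⟩
  set T := ∑' k, a (k + 2) * x ^ (k + 2)
  have hsx := summable_mul_pow_of_le ha hx hxx₀ hs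
  have hT : T ≤ B * x ^ 2 := tsum_mul_pow_add_two_le ha hx₀ hx hxx₀ hs
  have hy : 0 ≤ a 1 / a 0 * x := mul_nonneg (div_nonneg (ha 1) ha₀.le) hx
  have hpsd := two_mul_dTV_psdPMF_bernoulliPMF_le ha ha₀ hx hsx
  have hpoi := dTV_poissonPMF_bernoulliPMF_le hy
  rw [dTV_comm] at hpoi
  have hbT : a 1 * x * (a 1 * x + T) ≤ a 1 * (a 1 + B * x₀) * x ^ 2 := by
    have : T ≤ B * x₀ * x := by nlinarith [mul_le_mul_of_nonneg_left hxx₀ (mul_nonneg hB hx)]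
    nlinarith [mul_nonneg (ha 1) hx]
  calc dTV (psdPMF a x) (poissonPMF (a 1 / a 0 * x))
      ≤ dTV (psdPMF a x) (bernoulliPMF (a 1 / a 0 * x)) +
        dTV (bernoulliPMF (a 1 / a 0 * x)) (poissonPMF (a 1 / a 0 * x)) :=
        dTV_triangle (isPMF_psdPMF ha ha₀ hx hsx).summable (summable_bernoulliPMF _)
          (isPMF_poissonPMF hy).summable
    _ ≤ a 1 * x * (a 1 * x + T) / a 0 ^ 2 + T / a 0 + (a 1 / a 0 * x) ^ 2 := by linarith
    _ ≤ a 1 * (a 1 + B * x₀) * x ^ 2 / a 0 ^ 2 + B * x ^ 2 / a 0 + (a 1 / a 0 * x) ^ 2 := by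
        gcongr
    _ = (a 1 * (a 1 + B * x₀) / a 0 ^ 2 + B / a 0 + (a 1 / a 0) ^ 2) * x ^ 2 := by ring

end PowerSeriesDistribution

lemma tendsto_sum_sq_of_forall_lt {θ : (n : ℕ) → Fin n → ℝ} {l : ℝ} (hθ : ∀ n i, 0 ≤ θ n i)
    (hmax : ∀ ε > 0, ∀ᶠ n in atTop, ∀ i, θ n i < ε)
    (htot : Tendsto (fun n => ∑ i, θ n i) atTop (𝓝 l)) :
    Tendsto (fun n => ∑ i, θ n i ^ 2) atTop (𝓝 0) := by
  rw [Metric.tendsto_nhds]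
  intro ε hε
  have hL : 0 < |l| + 1 := by positivity
  filter_upwards [htot.eventually (gt_mem_nhds ((le_abs_self l).trans_lt (lt_add_one _))),
    hmax (ε / (|l| + 1)) (div_pos hε hL)] with n hsum hsmall
  rw [Real.dist_0_eq_abs, abs_of_nonneg (by positivity)]
  calc ∑ i, θ n i ^ 2 ≤ ∑ i, ε / (|l| + 1) * θ n i :=
        Finset.sum_le_sum fun i _ => by
          rw [sq]; exact mul_le_mul_of_nonneg_right (hsmall i).le (hθ n i)
    _ = ε / (|l| + 1) * ∑ i, θ n i := (Finset.mul_sum _ _ _).symm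
    _ < ε / (|l| + 1) * (|l| + 1) := by gcongr
    _ = ε := div_mul_cancel₀ ε hL.ne'

theorem psd_poisson_limit_general (a : ℕ → ℝ) (r l : ℝ)
    (θ : (n : ℕ) → Fin n → ℝ)
    (ha : ∀ k, 0 ≤ a k) (ha0 : 0 < a 0) (hr : 0 < r)
    (hsum : ∀ x : ℝ, 0 ≤ x → x < r → Summable (fun k : ℕ => a k * x ^ k))
    (hθpos : ∀ n i, 0 < θ n i)
    (hmax : ∀ ε : ℝ, 0 < ε → ∃ N : ℕ, ∀ n ≥ N, ∀ i : Fin n, θ n i < ε)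
    (htot : Tendsto (fun n : ℕ => ∑ i : Fin n, θ n i) atTop (nhds l)) :
    ∀ m : ℕ, Tendsto
      (fun n : ℕ =>
        convN (fun i k => a k * θ n i ^ k / (∑' j : ℕ, a j * θ n i ^ j)) m)
      atTop (nhds (poissonPMF (l * a 1 / a 0) m)) := by
  intro m
  change Tendsto (fun n => convN (fun i => psdPMF a (θ n i)) m) _ _
  have hr₂ := half_pos hr
  obtain ⟨K, hK⟩ := exists_dTV_psdPMF_poissonPMF_le ha ha0 hr₂ (hsum _ hr₂.le (half_lt_self hr))
  have hmax' : ∀ ε > 0, ∀ᶠ n in atTop, ∀ i, θ n i < ε := fun ε hε =>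
    eventually_atTop.2 (hmax ε hε)
  have hsq := tendsto_sum_sq_of_forall_lt (fun n i => (hθpos n i).le) hmax' htot
  have hclose : Tendsto (fun n => convN (fun i => psdPMF a (θ n i)) m -
      convN (fun i => poissonPMF (a 1 / a 0 * θ n i)) m) atTop (𝓝 0) := by
    refine tendsto_convN_sub_convN (ε := fun n i => K * θ n i ^ 2) ?_
      (fun n i => isPMF_poissonPMF (mul_nonneg (div_nonneg (ha 1) ha0.le) (hθpos n i).le)) ?_
      (by simpa [← Finset.mul_sum] using hsq.const_mul K) m
    · filter_upwards [hmax' _ hr₂] with n hn i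
      exact isPMF_psdPMF ha ha0 (hθpos n i).le
        (hsum _ (hθpos n i).le ((hn i).trans (half_lt_self hr)))
    · filter_upwards [hmax' _ hr₂] with n hn i
      exact hK _ (hθpos n i).le (hn i).le
  have hpoisson : Tendsto (fun n => convN (fun i => poissonPMF (a 1 / a 0 * θ n i)) m) atTop
      (𝓝 (poissonPMF (l * a 1 / a 0) m)) := by
    simp_rw [convN_poissonPMF, ← Finset.mul_sum]
    rw [show l * a 1 / a 0 = a 1 / a 0 * l by ring]
    exact ((continuous_poissonPMF m).tendsto _).comp (htot.const_mul _)
  simpa using hclose.add hpoisson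

/-- Poisson limit theorem (Pérez-Abreu) for triangular arrays of
independent PSD random variables: `S_n` converges in distribution to
`Poi(λ a₁ / a₀)` (for ℕ-valued random variables, convergence in distribution is
equivalent to pointwise convergence of the pmfs). -/
theorem psd_poisson_limit (a : ℕ → ℝ) (r l : ℝ)
    (θ : (n : ℕ) → Fin n → ℝ)
    (ha : ∀ k, 0 ≤ a k) (ha0 : 0 < a 0) (hr : 0 < r) (hl : 0 < l)
    (hsum : ∀ x : ℝ, 0 ≤ x → x < r → Summable (fun k : ℕ => a k * x ^ k))
    (hsum' : ∀ x : ℝ, 0 ≤ x → x < r →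
      Summable (fun k : ℕ => (k : ℝ) * a k * x ^ (k - 1)))
    (hsum'' : ∀ x : ℝ, 0 ≤ x → x < r →
      Summable (fun k : ℕ => (k : ℝ) * ((k : ℝ) - 1) * a k * x ^ (k - 2)))
    (hθpos : ∀ n i, 0 < θ n i)
    (hmax : ∀ ε : ℝ, 0 < ε → ∃ N : ℕ, ∀ n ≥ N, ∀ i : Fin n, θ n i < ε)
    (htot : Tendsto (fun n : ℕ => ∑ i : Fin n, θ n i) atTop (nhds l)) :
    ∀ m : ℕ, Tendsto
      (fun n : ℕ =>
        convN (fun i k => a k * θ n i ^ k / (∑' j : ℕ, a j * θ n i ^ j)) m)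
      atTop (nhds (poissonPMF (l * a 1 / a 0) m)) :=
  psd_poisson_limit_general a r l θ ha ha0 hr hsum hθpos hmax htot
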